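/- arXiv:2212.13719 — 3 statements merged into one kernel-verified Lean document; each statement's English description precedes it below -/
import Mathlib

section
/- Let n be an even positive integer, let r and s be integers with 2 ≤ r ≤ s ≤ 2r−1, and let m = s−r+1. Then τ(n, P^{(r)}_s) ≤ τ(n, LP^{(r)}_s) ≤ 2·h(n,r,m) + h(n,r−1,m). -/
open Finset
open scoped Classical

/-- Edge set of the natural tight path `P^{(r)}_s` on vertex set `[s] = {1,…,s}`:
all intervals of `r` consecutive integers. -/
def pathEdges (r s : ℕ) : Finset (Finset ℕ) :=
  (Finset.Icc 1 (s - r + 1)).image (fun i => Finset.Icc i (i + r - 1))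

/-- Edge set of the loose path `LP^{(r)}_s`: only the first and last edges. -/
def loosePathEdges (r s : ℕ) : Finset (Finset ℕ) :=
  {Finset.Icc 1 r, Finset.Icc (s - r + 1) s}

/-- `C` is the edge set of a copy in `K^{(r)}_n` of the ordered hypergraph with
vertex set `[s]` and edge set `E`, i.e. the image of `E` under a strictly
increasing map `[s] → [n]`. -/
def IsCopy (n s : ℕ) (E : Finset (Finset ℕ)) (C : Finset (Finset ℕ)) : Prop :=
  ∃ f : ℕ → ℕ, StrictMonoOn f ↑(Finset.Icc 1 s) ∧
    (∀ v ∈ Finset.Icc 1 s, f v ∈ Finset.Icc 1 n) ∧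
    C = E.image (fun e => e.image f)

/-- A transversal: a set `T` of `r`-element subsets of `[n]` meeting every copy. -/
def IsTransversal (n r s : ℕ) (E : Finset (Finset ℕ)) (T : Finset (Finset ℕ)) : Prop :=
  T ⊆ (Finset.Icc 1 n).powersetCard r ∧
  ∀ C : Finset (Finset ℕ), IsCopy n s E C → ∃ e ∈ C, e ∈ T

/-- The transversal number `τ(n,H)`. -/
noncomputable def tau (n r s : ℕ) (E : Finset (Finset ℕ)) : ℕ :=
  sInf {m | ∃ T : Finset (Finset ℕ), IsTransversal n r s E T ∧ T.card = m}

/-- A packing: an edge-disjoint family of copies. -/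
def IsPacking (n s : ℕ) (E : Finset (Finset ℕ)) (P : Finset (Finset (Finset ℕ))) : Prop :=
  (∀ C ∈ P, IsCopy n s E C) ∧
  ∀ C ∈ P, ∀ C' ∈ P, C ≠ C' → Disjoint C C'

/-- The packing number `ν(n,H)`. -/
noncomputable def nu (n s : ℕ) (E : Finset (Finset ℕ)) : ℕ :=
  sSup {m | ∃ P : Finset (Finset (Finset ℕ)), IsPacking n s E P ∧ P.card = m}

/-- The ordered Turán number: maximum number of edges of a subgraph of
`K^{(r)}_n` containing no copy of the hypergraph with edge set `E`. -/
noncomputable def exNum (n r s : ℕ) (E : Finset (Finset ℕ)) : ℕ :=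
  sSup {m | ∃ G ⊆ (Finset.Icc 1 n).powersetCard r,
    (∀ C : Finset (Finset ℕ), IsCopy n s E C → ¬ C ⊆ G) ∧ G.card = m}

/-- `S ⊆ [n]` is `m`-left-biased. -/
def LeftBiased (n m : ℕ) (S : Finset ℕ) : Prop :=
  ∃ u ≤ n / 2, (S ∩ Finset.Icc 1 u).card = m ∧ S ∩ Finset.Icc (n + 1 - u) n = ∅

/-- `h(n,t,m)`: the number of `m`-left-biased `t`-element subsets of `[n]`. -/
noncomputable def hcount (n t m : ℕ) : ℕ :=
  (((Finset.Icc 1 n).powersetCard t).filter (LeftBiased n m)).card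

/-- A fractional transversal. -/
def IsFracTransversal (n r s : ℕ) (E : Finset (Finset ℕ)) (w : Finset ℕ → ℝ) : Prop :=
  (∀ e ∈ (Finset.Icc 1 n).powersetCard r, 0 ≤ w e) ∧
  ∀ C : Finset (Finset ℕ), IsCopy n s E C → 1 ≤ ∑ e ∈ C, w e

/-- The fractional transversal number `τ*(n,H)`. -/
noncomputable def tauStar (n r s : ℕ) (E : Finset (Finset ℕ)) : ℝ :=
  sInf {x : ℝ | ∃ w : Finset ℕ → ℝ, IsFracTransversal n r s E w ∧
    x = ∑ e ∈ (Finset.Icc 1 n).powersetCard r, w e}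

/-- A `k`-edge-labeling of the ordered complete graph on `[n]`. -/
def IsLabeling (n k : ℕ) (φ : ℕ → ℕ → ℕ) : Prop :=
  ∀ u v : ℕ, u ∈ Finset.Icc 1 n → v ∈ Finset.Icc 1 n → u < v → φ u v ∈ Finset.Icc 1 k

/-- The number of good triples `u < v < w` in `[n]` (those with `φ(uv) < φ(vw)`). -/
def goodCount (n : ℕ) (φ : ℕ → ℕ → ℕ) : ℕ :=
  (((Finset.Icc 1 n) ×ˢ (Finset.Icc 1 n) ×ˢ (Finset.Icc 1 n)).filter
    (fun p => p.1 < p.2.1 ∧ p.2.1 < p.2.2 ∧ φ p.1 p.2.1 < φ p.2.1 p.2.2)).card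

/-- The number of bad triples `u < v < w` in `[n]` (those with `φ(uv) ≥ φ(vw)`). -/
def badCount (n : ℕ) (φ : ℕ → ℕ → ℕ) : ℕ :=
  (((Finset.Icc 1 n) ×ˢ (Finset.Icc 1 n) ×ˢ (Finset.Icc 1 n)).filter
    (fun p => p.1 < p.2.1 ∧ p.2.1 < p.2.2 ∧ ¬ φ p.1 p.2.1 < φ p.2.1 p.2.2)).card

/-- `f(n,k)`: the maximum number of good triples over all `k`-edge-labelings of `[n]`. -/
noncomputable def fmax (n k : ℕ) : ℕ :=
  sSup {m | ∃ φ : ℕ → ℕ → ℕ, IsLabeling n k φ ∧ goodCount n φ = m}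

/-- A labeling is monotone if `φ(uv) ≤ φ(vw)` whenever `u < v < w` in `[n]`. -/
def IsMonotone (n : ℕ) (φ : ℕ → ℕ → ℕ) : Prop :=
  ∀ u v w : ℕ, u ∈ Finset.Icc 1 n → v ∈ Finset.Icc 1 n → w ∈ Finset.Icc 1 n →
    u < v → v < w → φ u v ≤ φ v w

/-- `Φ_L(v) = max{φ(uv) : u < v}`, with `Φ_L(1) = 0`. -/
def PhiL (φ : ℕ → ℕ → ℕ) (v : ℕ) : ℕ := (Finset.Ico 1 v).sup (fun u => φ u v)

/-- `Φ_R(v) = min{φ(vw) : v < w ≤ n}`, with `Φ_R(n) = k+1`. -/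
noncomputable def PhiR (n k : ℕ) (φ : ℕ → ℕ → ℕ) (v : ℕ) : ℕ :=
  if v = n then k + 1 else sInf {m | ∃ w ∈ Finset.Ioc v n, φ v w = m}

/-- `X_i = {v ∈ [n] : Φ_L(v) = i}`. -/
def XL (n : ℕ) (φ : ℕ → ℕ → ℕ) (i : ℕ) : Finset ℕ :=
  (Finset.Icc 1 n).filter (fun v => PhiL φ v = i)

/-- `X̂_i = {v ∈ [n] : Φ_R(v) = i}`. -/
noncomputable def XR (n k : ℕ) (φ : ℕ → ℕ → ℕ) (i : ℕ) : Finset ℕ :=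
  (Finset.Icc 1 n).filter (fun v => PhiR n k φ v = i)

/-!
Let `m = s - r + 1 ≤ r`. A copy `f` of the loose path has the edges `A = f[1, r]` and
`B = f[m, s]`, and `f m` is the `m`-th smallest element of `A`. If `f m + f r ≤ n`, then `A` is
`m`-left-biased (take `u = f m`). If `f m + f r ≥ n + 2`, the mirror image `i ↦ n + 1 - i` of `B`
is `m`-left-biased (take `u = n + 1 - f r`): this is the first case for the reflected copy
`j ↦ n + 1 - f (s + 1 - j)`. In the remaining case `f m + f r = n + 1`; since `n` is even,
`f m < f r`, and deleting the maximum `f r` from `A` leaves an `m`-left-biased `(r - 1)`-set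
from which `A` can be recovered. This gives a transversal of size at most
`2 h(n, r, m) + h(n, r - 1, m)`, and a transversal of the loose path is one of the tight path,
whose edges contain those of the loose path.
-/

section

variable {n r s m : ℕ} {E E' T : Finset (Finset ℕ)}

theorem IsTransversal.of_subset (hE : E ⊆ E') (hT : IsTransversal n r s E T) :
    IsTransversal n r s E' T := by
  refine ⟨hT.1, ?_⟩
  rintro C ⟨f, hf, hfn, rfl⟩
  obtain ⟨e, he, heT⟩ := hT.2 _ ⟨f, hf, hfn, rfl⟩
  exact ⟨e, image_subset_image hE he, heT⟩

theorem tau_le_card (hT : IsTransversal n r s E T) : tau n r s E ≤ T.card :=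
  Nat.sInf_le ⟨T, hT, rfl⟩

theorem tau_le_tau_of_subset (hE : E ⊆ E') (hT : IsTransversal n r s E T) :
    tau n r s E' ≤ tau n r s E := by
  obtain ⟨T₀, hT₀, hcard⟩ :=
    Nat.sInf_mem (s := {k | ∃ T, IsTransversal n r s E T ∧ T.card = k}) ⟨T.card, T, hT, rfl⟩
  exact (tau_le_card (IsTransversal.of_subset hE hT₀)).trans_eq hcard

theorem loosePathEdges_subset_pathEdges (hr : 1 ≤ r) (hrs : r ≤ s) :
    loosePathEdges r s ⊆ pathEdges r s := by
  intro e he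
  simp only [loosePathEdges, mem_insert, mem_singleton] at he
  simp only [pathEdges, mem_image, mem_Icc]
  rcases he with rfl | rfl
  · exact ⟨1, ⟨le_rfl, by omega⟩, by congr 1; omega⟩
  · exact ⟨s - r + 1, ⟨by omega, le_rfl⟩, by congr 1; omega⟩

noncomputable def leftBiasedSets (n t m : ℕ) : Finset (Finset ℕ) :=
  ((Icc 1 n).powersetCard t).filter (LeftBiased n m)

theorem card_leftBiasedSets (n t m : ℕ) : (leftBiasedSets n t m).card = hcount n t m := rfl

def reflect (n : ℕ) (S : Finset ℕ) : Finset ℕ := S.image (n + 1 - ·)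

theorem reflect_mem_powersetCard {S : Finset ℕ} (hS : S ∈ (Icc 1 n).powersetCard r) :
    reflect n S ∈ (Icc 1 n).powersetCard r := by
  rw [mem_powersetCard] at hS ⊢
  have hsub : ∀ a ∈ S, 1 ≤ a ∧ a ≤ n := fun a ha => mem_Icc.1 (hS.1 ha)
  refine ⟨fun b hb => ?_, ?_⟩
  · obtain ⟨a, ha, rfl⟩ := mem_image.1 hb
    have := hsub a ha
    exact mem_Icc.2 ⟨by omega, by omega⟩
  · rw [reflect, card_image_of_injOn, hS.2]
    intro a ha b hb hab
    have := hsub a ha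
    have := hsub b hb
    simp only at hab
    omega

-- `x` is the `m`-th smallest element of `A` and `A.sup id` its largest.
noncomputable def midBiasedSets (n r m : ℕ) : Finset (Finset ℕ) :=
  ((Icc 1 n).powersetCard r).filter fun A =>
    ∃ x ∈ A, (A ∩ Icc 1 x).card = m ∧ x + A.sup id = n + 1

theorem strictMonoOn_card_inter_Icc (S : Finset ℕ) :
    StrictMonoOn (fun x => (S ∩ Icc 1 x).card) S := by
  intro x _ y hy hxy
  refine card_lt_card ((ssubset_iff_of_subset ?_).2 ⟨y, ?_, ?_⟩)
  · exact inter_subset_inter_left (Icc_subset_Icc_right hxy.le)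
  · exact mem_inter.2 ⟨hy, mem_Icc.2 ⟨by omega, le_rfl⟩⟩
  · simp only [mem_inter, mem_Icc]
    omega

theorem exists_of_mem_midBiasedSets (hev : Even n) {A : Finset ℕ}
    (hA : A ∈ midBiasedSets n r m) :
    A.sup id ∈ A ∧ ∃ x ∈ A.erase (A.sup id),
      (A.erase (A.sup id) ∩ Icc 1 x).card = m ∧ x + A.sup id = n + 1 ∧ x < A.sup id := by
  obtain ⟨-, x, hx, hcard, hsum⟩ := mem_filter.1 hA
  obtain ⟨y, hy, hsup⟩ := exists_mem_eq_sup A ⟨x, hx⟩ id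
  rw [id_eq] at hsup
  have hxy : x < A.sup id := by
    refine (le_sup (f := id) hx).lt_of_ne fun h => ?_
    obtain ⟨k, hk⟩ := hev
    simp only [id_eq] at h
    omega
  refine ⟨hsup ▸ hy, x, mem_erase.2 ⟨hxy.ne, hx⟩, ?_, hsum, hxy⟩
  rw [erase_inter, erase_eq_of_notMem fun h => by simp only [mem_inter, mem_Icc] at h; omega]
  exact hcard

-- Deleting the maximum is injective: `x` is recovered from `A.erase (max A)` by its rank `m`.
theorem card_midBiasedSets_le (hev : Even n) :
    (midBiasedSets n r m).card ≤ hcount n (r - 1) m := by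
  rw [← card_leftBiasedSets]
  refine card_le_card_of_injOn (fun A => A.erase (A.sup id)) (fun A hA => ?_)
    (fun A hA A' hA' h => ?_)
  · obtain ⟨hy, x, hx, hcard, hsum, hxy⟩ := exists_of_mem_midBiasedSets hev hA
    have hApow := mem_powersetCard.1 (mem_filter.1 hA).1
    refine mem_filter.2 ⟨mem_powersetCard.2 ⟨(erase_subset _ _).trans hApow.1, ?_⟩,
      x, by omega, hcard, eq_empty_iff_forall_notMem.2 fun a ha => ?_⟩
    · rw [card_erase_of_mem hy, hApow.2]
    · simp only [mem_inter, mem_erase, mem_Icc] at ha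
      have := le_sup (f := id) ha.1.2
      simp only [id_eq] at this
      omega
  · obtain ⟨hy, x, hx, hcard, hsum, -⟩ := exists_of_mem_midBiasedSets hev hA
    obtain ⟨hy', x', hx', hcard', hsum', -⟩ := exists_of_mem_midBiasedSets hev hA'
    simp only at h
    rw [h] at hx hcard
    have hxx : x = x' :=
      (strictMonoOn_card_inter_Icc _).injOn hx hx' (hcard.trans hcard'.symm)
    rw [← insert_erase hy, ← insert_erase hy', h]
    congr 1
    omega

section Copy

variable {f : ℕ → ℕ}

theorem image_Icc_mem_powersetCard (hf : StrictMonoOn f (Set.Icc 1 r))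
    (hfn : Set.MapsTo f (Set.Icc 1 r) (Set.Icc 1 n)) :
    (Icc 1 r).image f ∈ (Icc 1 n).powersetCard r := by
  refine mem_powersetCard.2 ⟨fun a ha => ?_, ?_⟩
  · obtain ⟨j, hj, rfl⟩ := mem_image.1 ha
    simpa using hfn (by simpa using hj)
  · rw [card_image_of_injOn (by simpa using hf.injOn), Nat.card_Icc, Nat.add_sub_cancel]

theorem card_image_Icc_inter_Icc (hf : StrictMonoOn f (Set.Icc 1 r))
    (hfn : Set.MapsTo f (Set.Icc 1 r) (Set.Icc 1 n)) (hm : m ∈ Set.Icc 1 r) :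
    ((Icc 1 r).image f ∩ Icc 1 (f m)).card = m := by
  have hsub : Set.Icc 1 m ⊆ Set.Icc 1 r := Set.Icc_subset_Icc_right hm.2
  have himage : (Icc 1 r).image f ∩ Icc 1 (f m) = (Icc 1 m).image f := by
    ext a
    simp only [mem_inter, mem_image, mem_Icc]
    constructor
    · rintro ⟨⟨j, hj, rfl⟩, -, hjm⟩
      exact ⟨j, ⟨hj.1, (hf.le_iff_le hj hm).1 hjm⟩, rfl⟩
    · rintro ⟨j, hj, rfl⟩
      exact ⟨⟨j, hsub hj, rfl⟩, (hfn (hsub hj)).1, (hf.le_iff_le (hsub hj) hm).2 hj.2⟩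
  rw [himage, card_image_of_injOn (by simpa using hf.injOn.mono hsub), Nat.card_Icc,
    Nat.add_sub_cancel]

theorem sup_image_Icc (hf : MonotoneOn f (Set.Icc 1 r)) (hr : 1 ≤ r) :
    ((Icc 1 r).image f).sup id = f r := by
  rw [sup_image, Function.id_comp]
  refine le_antisymm (Finset.sup_le fun j hj => ?_) (le_sup (f := f) (mem_Icc.2 ⟨hr, le_rfl⟩))
  rw [mem_Icc] at hj
  exact hf hj ⟨hr, le_rfl⟩ hj.2

theorem image_Icc_mem_leftBiasedSets (hf : StrictMonoOn f (Set.Icc 1 r))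
    (hfn : Set.MapsTo f (Set.Icc 1 r) (Set.Icc 1 n)) (hm : m ∈ Set.Icc 1 r)
    (h : f m + f r ≤ n) : (Icc 1 r).image f ∈ leftBiasedSets n r m := by
  have hr : r ∈ Set.Icc 1 r := ⟨hm.1.trans hm.2, le_rfl⟩
  have hmr := hf.monotoneOn hm hr hm.2
  refine mem_filter.2 ⟨image_Icc_mem_powersetCard hf hfn, f m, by omega,
    card_image_Icc_inter_Icc hf hfn hm, eq_empty_iff_forall_notMem.2 fun a ha => ?_⟩
  simp only [mem_inter, mem_image, mem_Icc] at ha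
  obtain ⟨⟨j, hj, rfl⟩, hlo, -⟩ := ha
  have := hf.monotoneOn hj hr hj.2
  omega

theorem image_Icc_mem_midBiasedSets (hf : StrictMonoOn f (Set.Icc 1 r))
    (hfn : Set.MapsTo f (Set.Icc 1 r) (Set.Icc 1 n)) (hm : m ∈ Set.Icc 1 r)
    (h : f m + f r = n + 1) : (Icc 1 r).image f ∈ midBiasedSets n r m :=
  mem_filter.2 ⟨image_Icc_mem_powersetCard hf hfn, f m, mem_image_of_mem f (mem_Icc.2 hm),
    card_image_Icc_inter_Icc hf hfn hm, by rwa [sup_image_Icc hf.monotoneOn (hm.1.trans hm.2)]⟩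

theorem strictMonoOn_reflect (hf : StrictMonoOn f (Set.Icc 1 s))
    (hfn : Set.MapsTo f (Set.Icc 1 s) (Set.Icc 1 n)) :
    StrictMonoOn (fun j => n + 1 - f (s + 1 - j)) (Set.Icc 1 s) := by
  intro i hi j hj hij
  have hi' : s + 1 - i ∈ Set.Icc 1 s := ⟨by grind, by grind⟩
  have hj' : s + 1 - j ∈ Set.Icc 1 s := ⟨by grind, by grind⟩
  have := hf hj' hi' (by grind)
  have := hfn hi'
  simp only [Set.mem_Icc] at this ⊢
  omega

theorem mapsTo_reflect (hfn : Set.MapsTo f (Set.Icc 1 s) (Set.Icc 1 n)) :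
    Set.MapsTo (fun j => n + 1 - f (s + 1 - j)) (Set.Icc 1 s) (Set.Icc 1 n) := by
  intro j hj
  have := hfn (show s + 1 - j ∈ Set.Icc 1 s from ⟨by grind, by grind⟩)
  simp only [Set.mem_Icc] at this ⊢
  omega

theorem reflect_image_Icc (hfn : Set.MapsTo f (Set.Icc 1 s) (Set.Icc 1 n)) (hrs : r ≤ s) :
    reflect n ((Icc 1 r).image fun j => n + 1 - f (s + 1 - j)) = (Icc (s - r + 1) s).image f := by
  ext a
  simp only [reflect, mem_image, mem_Icc]
  constructor
  · rintro ⟨b, ⟨j, hj, rfl⟩, rfl⟩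
    have := hfn (show s + 1 - j ∈ Set.Icc 1 s from ⟨by omega, by omega⟩)
    exact ⟨s + 1 - j, by omega, by simp only [Set.mem_Icc] at this; omega⟩
  · rintro ⟨i, hi, rfl⟩
    have hii : s + 1 - (s + 1 - i) = i := by omega
    have := hfn (show i ∈ Set.Icc 1 s from ⟨by omega, hi.2⟩)
    refine ⟨_, ⟨s + 1 - i, by omega, rfl⟩, ?_⟩
    simp only [Set.mem_Icc, hii] at this ⊢
    omega

end Copy

noncomputable def loosePathTransversal (n r m : ℕ) : Finset (Finset ℕ) :=
  leftBiasedSets n r m ∪ (leftBiasedSets n r m).image (reflect n) ∪ midBiasedSets n r m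

theorem card_loosePathTransversal_le (hev : Even n) :
    (loosePathTransversal n r m).card ≤ 2 * hcount n r m + hcount n (r - 1) m := by
  calc (loosePathTransversal n r m).card
      ≤ (leftBiasedSets n r m).card + ((leftBiasedSets n r m).image (reflect n)).card
        + (midBiasedSets n r m).card :=
        (card_union_le _ _).trans (Nat.add_le_add_right (card_union_le _ _) _)
    _ ≤ hcount n r m + hcount n r m + hcount n (r - 1) m :=
        Nat.add_le_add (Nat.add_le_add_left card_image_le _) (card_midBiasedSets_le hev)
    _ = 2 * hcount n r m + hcount n (r - 1) m := by ring

theorem isTransversal_loosePathTransversal (hr : 1 ≤ r) (hrs : r ≤ s)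
    (hs : s < 2 * r) :
    IsTransversal n r s (loosePathEdges r s) (loosePathTransversal n r (s - r + 1)) := by
  refine ⟨fun A hA => ?_, ?_⟩
  · simp only [loosePathTransversal, mem_union, mem_image] at hA
    rcases hA with (hA | ⟨B, hB, rfl⟩) | hA
    · exact (mem_filter.1 hA).1
    · exact reflect_mem_powersetCard (mem_filter.1 hB).1
    · exact (mem_filter.1 hA).1
  rintro C ⟨f, hf, hfn', rfl⟩
  rw [coe_Icc] at hf
  have hfn : Set.MapsTo f (Set.Icc 1 s) (Set.Icc 1 n) := fun v hv => by
    simpa using hfn' v (mem_Icc.2 hv)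
  generalize hm' : s - r + 1 = m
  have hm : m ∈ Set.Icc 1 r := ⟨by omega, by omega⟩
  have hsub : Set.Icc 1 r ⊆ Set.Icc 1 s := Set.Icc_subset_Icc_right hrs
  have hfirst : (Icc 1 r).image f ∈ (loosePathEdges r s).image (image f) :=
    mem_image_of_mem _ (by simp [loosePathEdges])
  have hlast : (Icc m s).image f ∈ (loosePathEdges r s).image (image f) :=
    mem_image_of_mem _ (by simp [loosePathEdges, ← hm'])
  rcases lt_trichotomy (f m + f r) (n + 1) with h | h | h
  · exact ⟨_, hfirst, mem_union_left _ (mem_union_left _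
      (image_Icc_mem_leftBiasedSets (hf.mono hsub) (hfn.mono_left hsub) hm (by omega)))⟩
  · exact ⟨_, hfirst, mem_union_right _
      (image_Icc_mem_midBiasedSets (hf.mono hsub) (hfn.mono_left hsub) hm h)⟩
  · refine ⟨_, hlast, mem_union_left _ (mem_union_right _ ?_)⟩
    rw [← hm', ← reflect_image_Icc hfn hrs, hm']
    refine mem_image_of_mem _ (image_Icc_mem_leftBiasedSets
      ((strictMonoOn_reflect hf hfn).mono hsub) ((mapsTo_reflect hfn).mono_left hsub) hm ?_)
    have hmr : s + 1 - m = r := by omega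
    have hrm : s + 1 - r = m := by omega
    have hfm := hfn (hsub hm)
    have hfr := hfn (hsub ⟨hr, le_rfl⟩)
    simp only [hmr, hrm, Set.mem_Icc] at hfm hfr ⊢
    omega

end

theorem stmt0_general (n r s m : ℕ) (hev : Even n)
    (hr : 2 ≤ r) (hrs : r ≤ s) (hs : s ≤ 2 * r - 1) (hm : m = s - r + 1) :
    tau n r s (pathEdges r s) ≤ tau n r s (loosePathEdges r s) ∧
    tau n r s (loosePathEdges r s) ≤ 2 * hcount n r m + hcount n (r - 1) m := by
  subst hm
  have hT := isTransversal_loosePathTransversal (n := n) (by omega) hrs (by omega)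
  exact ⟨tau_le_tau_of_subset (loosePathEdges_subset_pathEdges (by omega) hrs) hT,
    (tau_le_card hT).trans (card_loosePathTransversal_le hev)⟩

/-- For even `n > 0`, `2 ≤ r ≤ s ≤ 2r-1` and `m = s-r+1`,
`τ(n, P^{(r)}_s) ≤ τ(n, LP^{(r)}_s) ≤ 2·h(n,r,m) + h(n,r-1,m)`. -/
theorem stmt0 (n r s m : ℕ) (hn : 0 < n) (hev : Even n)
    (hr : 2 ≤ r) (hrs : r ≤ s) (hs : s ≤ 2 * r - 1) (hm : m = s - r + 1) :
    tau n r s (pathEdges r s) ≤ tau n r s (loosePathEdges r s) ∧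
    tau n r s (loosePathEdges r s) ≤ 2 * hcount n r m + hcount n (r - 1) m :=
  stmt0_general n r s m hev hr hrs hs hm
end

section
/- Let n be an even positive integer, let r and s be integers with 2 ≤ r ≤ s ≤ 2r−1, and let m = s−r+1. Then ν(n, P^{(r)}_s) ≥ 2·h(n,r,m) + h(n,r−1,m). -/
open Finset
open scoped Classical

/-!
Let `S = {σ₁ < ⋯ < σ_t}` be `m`-left-biased, so that `σ_m ≤ n / 2` and `σ_m + σ_t ≤ n`. Then
`σ₁, …, σ_t` followed by suitable translates `σ₁ + D, σ₂ + D, …` is an increasing sequence in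
`[n]`, and its windows of `r` consecutive terms form a copy of `P^{(r)}_{r+m-1}`. Every
`m`-left-biased `r`-set yields two such copies (the second one mirrored by `x ↦ n + 1 - x`) and
every `m`-left-biased `(r-1)`-set one more. An edge of a copy is a window, so two copies sharing
an edge have two windows that agree term by term; comparing a few of these terms with
`σ_m ≤ n / 2` and `σ_m + σ_t ≤ n` shows that both copies come from the same set by the same
construction. So the copies are pairwise edge-disjoint.
-/

theorem StrictMonoOn.apply_add_sub_le {f : ℕ → ℕ} {p q a b : ℕ}
    (hf : StrictMonoOn f (Icc p q)) (hpa : p ≤ a) (hab : a ≤ b) (hbq : b ≤ q) :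
    f a + (b - a) ≤ f b := by
  induction b, hab using Nat.le_induction with
  | base => simp
  | succ b hab ih =>
    have hstep := hf (a := b) (b := b + 1) (by simp; omega) (by simp; omega) (by omega)
    have := ih (by omega)
    omega

theorem StrictMonoOn.apply_add_eq_of_image_Icc_eq {f g : ℕ → ℕ} {a c d k : ℕ}
    (hf : StrictMonoOn f (Icc a (a + d))) (hg : StrictMonoOn g (Icc c (c + d)))
    (h : (Icc a (a + d)).image f = (Icc c (c + d)).image g) (hk : k ≤ d) :
    f (a + k) = g (c + k) := by
  set T := (Icc a (a + d)).image f
  have hT : #T = d + 1 := by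
    rw [card_image_of_injOn hf.injOn, Nat.card_Icc]; omega
  have hfT : (fun x : Fin (d + 1) => f (a + x)) = T.orderEmbOfFin hT :=
    orderEmbOfFin_unique hT (fun x => mem_image_of_mem f (by simp; omega))
      (fun x y hxy => hf (by simp; omega) (by simp; omega) (by rw [Fin.lt_def] at hxy; omega))
  have hgT : (fun x : Fin (d + 1) => g (c + x)) = T.orderEmbOfFin hT :=
    orderEmbOfFin_unique hT (fun x => h ▸ mem_image_of_mem g (by simp; omega))
      (fun x y hxy => hg (by simp; omega) (by simp; omega) (by rw [Fin.lt_def] at hxy; omega))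
  exact congrFun (hfT.trans hgT.symm) ⟨k, by omega⟩

/-- The `v`-th smallest element of `S`, counting from `v = 1`; `0` outside `[1, #S]`. -/
noncomputable def orderEnum (S : Finset ℕ) (v : ℕ) : ℕ :=
  if h : v - 1 < #S then S.orderEmbOfFin rfl ⟨v - 1, h⟩ else 0

section OrderEnum

variable {S : Finset ℕ} {v : ℕ}

theorem orderEnum_of_mem_Icc (hv : v ∈ Icc 1 #S) :
    orderEnum S v = S.orderEmbOfFin rfl ⟨v - 1, by simp only [mem_Icc] at hv; omega⟩ :=
  dif_pos _

theorem orderEnum_mem (hv : v ∈ Icc 1 #S) : orderEnum S v ∈ S := by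
  rw [orderEnum_of_mem_Icc hv]
  exact orderEmbOfFin_mem S rfl _

theorem strictMonoOn_orderEnum (S : Finset ℕ) : StrictMonoOn (orderEnum S) (Icc 1 #S) := by
  intro a ha b hb hab
  rw [orderEnum_of_mem_Icc ha, orderEnum_of_mem_Icc hb]
  refine (S.orderEmbOfFin rfl).strictMono ?_
  simp only [coe_Icc, Set.mem_Icc] at ha hb
  simp only [Fin.mk_lt_mk]
  omega

theorem image_orderEnum (S : Finset ℕ) : (Icc 1 #S).image (orderEnum S) = S := by
  refine eq_of_subset_of_card_le (fun x hx => ?_) ?_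
  · obtain ⟨v, hv, rfl⟩ := mem_image.mp hx
    exact orderEnum_mem hv
  · rw [card_image_of_injOn (strictMonoOn_orderEnum S).injOn, Nat.card_Icc]
    omega

theorem orderEnum_le_of_le_card_inter {m u : ℕ} (hm : 1 ≤ m) (h : m ≤ #(S ∩ Icc 1 u)) :
    orderEnum S m ≤ u := by
  by_contra! hlt
  have hmS : m ≤ #S := h.trans (card_le_card inter_subset_left)
  have hsub : S ∩ Icc 1 u ⊆ (Icc 1 (m - 1)).image (orderEnum S) := by
    intro x hx
    obtain ⟨hxS, hxu⟩ := mem_inter.mp hx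
    rw [← image_orderEnum S] at hxS
    obtain ⟨v, hv, rfl⟩ := mem_image.mp hxS
    refine mem_image_of_mem _ ?_
    simp only [mem_Icc] at hv hxu ⊢
    by_contra! hmv
    have := (strictMonoOn_orderEnum S).monotoneOn (a := m) (b := v)
      (by simp; omega) (by simp; omega) (by omega)
    omega
  have := (card_le_card hsub).trans card_image_le
  simp only [Nat.card_Icc] at this
  omega

end OrderEnum

section Packing

variable {n s : ℕ} {E : Finset (Finset ℕ)}

theorem IsPacking.subset_powerset_powerset (hE : ∀ e ∈ E, e ⊆ Icc 1 s)
    {P : Finset (Finset (Finset ℕ))} (hP : IsPacking n s E P) :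
    P ⊆ (Icc 1 n).powerset.powerset := by
  intro C hC
  obtain ⟨f, -, hf, rfl⟩ := hP.1 C hC
  simp only [mem_powerset, image_subset_iff]
  intro e he v hv
  exact hf v (hE e he hv)

theorem IsPacking.card_le_nu (hE : ∀ e ∈ E, e ⊆ Icc 1 s) {P : Finset (Finset (Finset ℕ))}
    (hP : IsPacking n s E P) : #P ≤ nu n s E :=
  le_csSup ⟨#(Icc 1 n).powerset.powerset, by
    rintro _ ⟨Q, hQ, rfl⟩
    exact card_le_card (hQ.subset_powerset_powerset hE)⟩ ⟨P, hP, rfl⟩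

theorem card_le_nu_of_not_disjoint_imp_eq {ι : Type*} (hE : ∀ e ∈ E, e ⊆ Icc 1 s)
    {I : Finset ι} {c : ι → Finset (Finset ℕ)} (hcopy : ∀ x ∈ I, IsCopy n s E (c x))
    (hne : ∀ x ∈ I, (c x).Nonempty) (heq : ∀ x ∈ I, ∀ y ∈ I, ¬Disjoint (c x) (c y) → x = y) :
    #I ≤ nu n s E := by
  have hinj : Set.InjOn c I := fun x hx y hy hxy =>
    heq x hx y hy (by rw [hxy, disjoint_self_iff_empty]; exact (hne y hy).ne_empty)
  rw [← card_image_of_injOn hinj]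
  refine IsPacking.card_le_nu hE ⟨?_, ?_⟩
  · simp only [mem_image, forall_exists_index, and_imp, forall_apply_eq_imp_iff₂]
    exact hcopy
  · simp only [mem_image, forall_exists_index, and_imp, forall_apply_eq_imp_iff₂]
    intro x hx y hy hxy
    by_contra hd
    exact hxy (congrArg c (heq x hx y hy hd))

end Packing

def pathCopy (r s : ℕ) (F : ℕ → ℕ) : Finset (Finset ℕ) :=
  (pathEdges r s).image (fun e => e.image F)

section PathCopy

variable {r s : ℕ}

theorem subset_Icc_of_mem_pathEdges (hrs : r ≤ s) : ∀ e ∈ pathEdges r s, e ⊆ Icc 1 s := by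
  simp only [pathEdges, mem_image, mem_Icc, forall_exists_index, and_imp]
  rintro _ i hi hi' rfl
  exact Icc_subset_Icc hi (by omega)

theorem pathCopy_nonempty (F : ℕ → ℕ) : (pathCopy r s F).Nonempty :=
  ((nonempty_Icc.mpr (by omega)).image _).image _

theorem exists_window_eq_of_not_disjoint_pathCopy (hr : 1 ≤ r) (hrs : r ≤ s) {F G : ℕ → ℕ}
    (hF : StrictMonoOn F (Icc 1 s)) (hG : StrictMonoOn G (Icc 1 s))
    (h : ¬Disjoint (pathCopy r s F) (pathCopy r s G)) :
    ∃ i j, 1 ≤ i ∧ i ≤ s + 1 - r ∧ 1 ≤ j ∧ j ≤ s + 1 - r ∧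
      ∀ k ≤ r - 1, F (i + k) = G (j + k) := by
  obtain ⟨x, hxF, hxG⟩ := not_disjoint_iff.mp h
  simp only [pathCopy, pathEdges, mem_image, mem_Icc] at hxF hxG
  obtain ⟨_, ⟨i, hi, rfl⟩, rfl⟩ := hxF
  obtain ⟨_, ⟨j, hj, rfl⟩, hx⟩ := hxG
  refine ⟨i, j, hi.1, by omega, hj.1, by omega, fun k hk => ?_⟩
  have hwindow : ∀ a, 1 ≤ a → a ≤ s - r + 1 → StrictMonoOn F (Icc a (a + (r - 1))) ∧
      StrictMonoOn G (Icc a (a + (r - 1))) := fun a ha ha' =>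
    ⟨hF.mono (Icc_subset_Icc ha (by omega)), hG.mono (Icc_subset_Icc ha (by omega))⟩
  rw [show j + r - 1 = j + (r - 1) by omega, show i + r - 1 = i + (r - 1) by omega] at hx
  exact StrictMonoOn.apply_add_eq_of_image_Icc_eq (hwindow i hi.1 hi.2).1
    (hwindow j hj.1 hj.2).2 hx.symm hk

end PathCopy

/-- The conditions satisfied by the increasing enumeration `f` of an `m`-left-biased `t`-set:
the witness `u` of `LeftBiased` satisfies `f m ≤ u ≤ n / 2` and `f t ≤ n - u`. -/
structure IsLeftBiasedEnum (n m t : ℕ) (f : ℕ → ℕ) : Prop where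
  strictMonoOn : StrictMonoOn f (Icc 1 t)
  one_le : 1 ≤ f 1
  le_length : m ≤ t
  le_half : f m ≤ n / 2
  add_le : f m + f t ≤ n

theorem LeftBiased.isLeftBiasedEnum {n m : ℕ} {S : Finset ℕ} (hm : 1 ≤ m)
    (hSn : S ⊆ Icc 1 n) (hS : LeftBiased n m S) : IsLeftBiasedEnum n m #S (orderEnum S) := by
  obtain ⟨u, hu, hcard, hempty⟩ := hS
  have hmS : m ≤ #S := hcard ▸ card_le_card inter_subset_left
  have hmem : ∀ v ∈ Icc 1 #S, orderEnum S v ∈ Icc 1 n := fun v hv => hSn (orderEnum_mem hv)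
  have hun : u ≤ n := hu.trans (Nat.div_le_self n 2)
  have hlast : orderEnum S #S ≤ n - u := by
    by_contra! hgt
    have hlast : orderEnum S #S ∈ S ∩ Icc (n + 1 - u) n := by
      have hS : #S ∈ Icc 1 #S := mem_Icc.mpr ⟨by omega, le_rfl⟩
      have := hmem #S hS
      simp only [mem_Icc] at this
      exact mem_inter.mpr ⟨orderEnum_mem hS, by simp only [mem_Icc]; omega⟩
    simp [hempty] at hlast
  have hfirst := hmem 1 (mem_Icc.mpr ⟨le_rfl, by omega⟩)
  simp only [mem_Icc] at hfirst
  have hmu := orderEnum_le_of_le_card_inter hm hcard.ge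
  exact ⟨strictMonoOn_orderEnum S, hfirst.1, hmS, hmu.trans hu, by omega⟩

noncomputable def biasedSets (n t m : ℕ) : Finset (Finset ℕ) :=
  ((Icc 1 n).powersetCard t).filter (LeftBiased n m)

section BiasedSets

variable {n t m : ℕ} {S S' : Finset ℕ}

theorem isLeftBiasedEnum_of_mem_biasedSets (hm : 1 ≤ m) (hS : S ∈ biasedSets n t m) :
    IsLeftBiasedEnum n m t (orderEnum S) := by
  rw [biasedSets, mem_filter, mem_powersetCard] at hS
  exact hS.1.2 ▸ hS.2.isLeftBiasedEnum hm hS.1.1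

theorem eq_of_eqOn_orderEnum (hS : S ∈ biasedSets n t m) (hS' : S' ∈ biasedSets n t m)
    (h : Set.EqOn (orderEnum S) (orderEnum S') (Icc 1 t)) : S = S' := by
  rw [biasedSets, mem_filter, mem_powersetCard] at hS hS'
  rw [← image_orderEnum S, ← image_orderEnum S', hS.1.2, hS'.1.2]
  exact image_congr h

end BiasedSets

namespace IsLeftBiasedEnum

variable {n m t : ℕ} {f : ℕ → ℕ}

theorem add_sub_le (hf : IsLeftBiasedEnum n m t f) {a b : ℕ} (ha : 1 ≤ a) (hb : b ≤ t)
    (hab : a ≤ b) : f a + (b - a) ≤ f b :=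
  hf.strictMonoOn.apply_add_sub_le ha hab hb

theorem one_le_apply (hf : IsLeftBiasedEnum n m t f) {a : ℕ} (ha : 1 ≤ a) (hat : a ≤ t) :
    1 ≤ f a := by
  have := hf.add_sub_le le_rfl hat ha
  have := hf.one_le
  omega

theorem apply_add_le (hf : IsLeftBiasedEnum n m t f) {a : ℕ} (ha : 1 ≤ a) (hat : a ≤ t) :
    f a + f m ≤ n := by
  have := hf.add_sub_le ha le_rfl hat
  have := hf.add_le
  omega

end IsLeftBiasedEnum

def shiftAppend (t D : ℕ) (f : ℕ → ℕ) (v : ℕ) : ℕ :=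
  if v ≤ t then f v else f (v - t) + D

section ShiftAppend

variable {t D v : ℕ} {f : ℕ → ℕ}

theorem shiftAppend_of_le (h : v ≤ t) : shiftAppend t D f v = f v := if_pos h

theorem shiftAppend_of_lt (h : t < v) : shiftAppend t D f v = f (v - t) + D :=
  if_neg (not_le.mpr h)

theorem StrictMonoOn.shiftAppend {s : ℕ} (hf : StrictMonoOn f (Icc 1 t)) (hs : s ≤ 2 * t)
    (hD : f t < f 1 + D) : StrictMonoOn (shiftAppend t D f) (Icc 1 s) := by
  intro a ha b hb hab
  simp only [coe_Icc, Set.mem_Icc] at ha hb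
  have hmono := hf.monotoneOn
  unfold _root_.shiftAppend
  split_ifs with hat hbt hbt
  · exact hf (by simp; omega) (by simp; omega) hab
  · have := hmono (a := a) (b := t) (by simp; omega) (by simp; omega) hat
    have := hmono (a := 1) (b := b - t) (by simp; omega) (by simp; omega) (by omega)
    omega
  · omega
  · have := hf (a := a - t) (b := b - t) (by simp; omega) (by simp; omega) (by omega)
    omega

end ShiftAppend

/- Choice of the shifts: in `leftMap` the translate of `f m` would be `n`, in `rightMap` (mirrored
by `x ↦ n + 1 - x`) it would be `n + 1`, and in `midMap` the translates of `f 1, …, f m` run from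
`n + 1 - f m` to `n + 1 - f 1`. -/

def leftMap (n r m : ℕ) (f : ℕ → ℕ) : ℕ → ℕ := shiftAppend r (n - f m) f

def rightMap (n r m : ℕ) (f : ℕ → ℕ) (v : ℕ) : ℕ :=
  n + 1 - shiftAppend r (n - f m + 1) f (r + m - v)

def midMap (n r m : ℕ) (f : ℕ → ℕ) : ℕ → ℕ := shiftAppend (r - 1) (n + 1 - f m - f 1) f

namespace IsLeftBiasedEnum

variable {n m r : ℕ} {f : ℕ → ℕ}

theorem strictMonoOn_shiftAppend {β : ℕ} (hm : 1 ≤ m) (hf : IsLeftBiasedEnum n m r f)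
    (hβ : β ≤ 1) : StrictMonoOn (shiftAppend r (n - f m + β) f) (Icc 1 (r + m - 1)) := by
  have := hf.le_length
  have := hf.add_le
  exact hf.strictMonoOn.shiftAppend (by omega) (by have := hf.one_le; omega)

theorem shiftAppend_mem_Icc {β v : ℕ} (hm : 1 ≤ m) (hf : IsLeftBiasedEnum n m r f)
    (hβ : β ≤ 1) (hv : v ∈ Icc 1 (r + m - 1)) : shiftAppend r (n - f m + β) f v ∈ Icc 1 n := by
  simp only [mem_Icc] at hv ⊢
  have := hf.le_length
  by_cases hvr : v ≤ r
  · rw [shiftAppend_of_le hvr]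
    have := hf.one_le_apply hv.1 hvr
    have := hf.apply_add_le hv.1 hvr
    omega
  · rw [shiftAppend_of_lt (by omega)]
    have := hf.add_sub_le (a := v - r) (b := m) (by omega) (by omega) (by omega)
    have := hf.apply_add_le hm (by omega)
    omega

theorem rightMap_add_shiftAppend {v : ℕ} (hm : 1 ≤ m) (hf : IsLeftBiasedEnum n m r f)
    (hv : v ∈ Icc 1 (r + m - 1)) :
    rightMap n r m f v + shiftAppend r (n - f m + 1) f (r + m - v) = n + 1 := by
  have hmem := hf.shiftAppend_mem_Icc hm le_rfl (v := r + m - v) (by simp at hv ⊢; omega)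
  simp only [mem_Icc] at hmem
  unfold rightMap
  omega

theorem strictMonoOn_rightMap (hm : 1 ≤ m) (hf : IsLeftBiasedEnum n m r f) :
    StrictMonoOn (rightMap n r m f) (Icc 1 (r + m - 1)) := by
  intro a ha b hb hab
  simp only [coe_Icc, Set.mem_Icc] at ha hb
  have := hf.strictMonoOn_shiftAppend hm le_rfl (a := r + m - b) (b := r + m - a)
    (by simp; omega) (by simp; omega) (by omega)
  have := hf.rightMap_add_shiftAppend hm (v := a) (by simp; omega)
  have := hf.rightMap_add_shiftAppend hm (v := b) (by simp; omega)
  omega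

theorem rightMap_mem_Icc {v : ℕ} (hm : 1 ≤ m) (hf : IsLeftBiasedEnum n m r f)
    (hv : v ∈ Icc 1 (r + m - 1)) : rightMap n r m f v ∈ Icc 1 n := by
  have hmem := hf.shiftAppend_mem_Icc hm le_rfl (v := r + m - v) (by simp at hv ⊢; omega)
  have hsum := hf.rightMap_add_shiftAppend hm hv
  simp only [mem_Icc] at hmem ⊢
  omega

theorem strictMonoOn_midMap (hm : 1 ≤ m) (hf : IsLeftBiasedEnum n m (r - 1) f) :
    StrictMonoOn (midMap n r m f) (Icc 1 (r + m - 1)) := by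
  have hmr := hf.le_length
  have hsum := hf.add_le
  have hgap := hf.add_sub_le le_rfl hmr hm
  exact hf.strictMonoOn.shiftAppend (by omega) (by omega)

theorem midMap_mem_Icc {v : ℕ} (hm : 1 ≤ m) (hf : IsLeftBiasedEnum n m (r - 1) f)
    (hv : v ∈ Icc 1 (r + m - 1)) : midMap n r m f v ∈ Icc 1 n := by
  simp only [mem_Icc] at hv ⊢
  have hmr := hf.le_length
  have h1 := hf.one_le
  unfold midMap
  by_cases hvr : v ≤ r - 1
  · rw [shiftAppend_of_le hvr]
    have hpos := hf.one_le_apply hv.1 hvr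
    have hle := hf.apply_add_le hv.1 hvr
    omega
  · rw [shiftAppend_of_lt (by omega)]
    have hgap := hf.add_sub_le (a := v - (r - 1)) (b := m) (by omega) (by omega) (by omega)
    have hpos := hf.one_le_apply (a := v - (r - 1)) (by omega) (by omega)
    have hle := hf.apply_add_le hm (by omega)
    omega

end IsLeftBiasedEnum

namespace IsLeftBiasedEnum

variable {n m r : ℕ} {f f' : ℕ → ℕ} {i j : ℕ}

theorem shiftAppend_window_ne_of_lt {β : ℕ} (hm : 1 ≤ m) (hf : IsLeftBiasedEnum n m r f)
    (hf' : IsLeftBiasedEnum n m r f') (hi : 1 ≤ i) (hij : i < j) (hjm : j ≤ m)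
    (E : ∀ k ≤ r - 1,
      shiftAppend r (n - f m + β) f (i + k) = shiftAppend r (n - f' m + β) f' (j + k)) :
    False := by
  -- Position `r` gives `f m < f' m`; position `m` gives `f' m < f m` or `n < f m + f' m`.
  have hmr := hf.le_length
  have hfm := hf.le_half
  have hf'm := hf'.le_half
  have hsum := hf.add_le
  have e1 := E (r - i) (by omega)
  rw [show i + (r - i) = r by omega, shiftAppend_of_le le_rfl, shiftAppend_of_lt (by omega),
    show j + (r - i) - r = j - i by omega] at e1
  have hpos := hf'.one_le_apply (a := j - i) (by omega) (by omega)
  have e2 := E (m - i) (by omega)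
  rw [show i + (m - i) = m by omega, shiftAppend_of_le hmr] at e2
  by_cases hc : j + (m - i) ≤ r
  · rw [shiftAppend_of_le hc] at e2
    have hgap := hf'.add_sub_le (a := m) (b := j + (m - i)) hm hc (by omega)
    omega
  · rw [shiftAppend_of_lt (by omega)] at e2
    have hpos' := hf'.one_le_apply (a := j + (m - i) - r) (by omega) (by omega)
    omega

theorem eqOn_of_shiftAppend_window_eq {β : ℕ} (hm : 1 ≤ m) (hf : IsLeftBiasedEnum n m r f)
    (hf' : IsLeftBiasedEnum n m r f') (hi : 1 ≤ i) (him : i ≤ m) (hj : 1 ≤ j) (hjm : j ≤ m)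
    (E : ∀ k ≤ r - 1,
      shiftAppend r (n - f m + β) f (i + k) = shiftAppend r (n - f' m + β) f' (j + k)) :
    Set.EqOn f f' (Icc 1 r) := by
  wlog hij : i ≤ j generalizing f f' i j
  · exact (this hf' hf hj hjm hi him (fun k hk => (E k hk).symm) (by omega)).symm
  rcases hij.eq_or_lt with rfl | hlt
  · have hmr := hf.le_length
    have hm_eq : f m = f' m := by
      have e := E (m - i) (by omega)
      rwa [show i + (m - i) = m by omega, shiftAppend_of_le hmr, shiftAppend_of_le hmr] at e
    intro v hv
    simp only [coe_Icc, Set.mem_Icc] at hv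
    by_cases hiv : i ≤ v
    · have e := E (v - i) (by omega)
      rwa [show i + (v - i) = v by omega, shiftAppend_of_le hv.2, shiftAppend_of_le hv.2] at e
    · have e := E (r - i + v) (by omega)
      rw [show i + (r - i + v) = r + v by omega, shiftAppend_of_lt (by omega),
        shiftAppend_of_lt (by omega), show r + v - r = v by omega] at e
      omega
  · exact (hf.shiftAppend_window_ne_of_lt hm hf' hi hlt hjm E).elim

theorem eqOn_of_rightMap_window_eq (hm : 1 ≤ m) (hf : IsLeftBiasedEnum n m r f)
    (hf' : IsLeftBiasedEnum n m r f') (hi : 1 ≤ i) (him : i ≤ m) (hj : 1 ≤ j) (hjm : j ≤ m)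
    (E : ∀ k ≤ r - 1, rightMap n r m f (i + k) = rightMap n r m f' (j + k)) :
    Set.EqOn f f' (Icc 1 r) := by
  have hmr := hf.le_length
  refine hf.eqOn_of_shiftAppend_window_eq (β := 1) (i := m + 1 - i) (j := m + 1 - j) hm hf'
    (by omega) (by omega) (by omega) (by omega) fun k hk => ?_
  have e := E (r - 1 - k) (by omega)
  have h := hf.rightMap_add_shiftAppend hm (v := i + (r - 1 - k)) (by simp only [mem_Icc]; omega)
  have h' := hf'.rightMap_add_shiftAppend hm (v := j + (r - 1 - k)) (by simp only [mem_Icc]; omega)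
  rw [show r + m - (i + (r - 1 - k)) = m + 1 - i + k by omega] at h
  rw [show r + m - (j + (r - 1 - k)) = m + 1 - j + k by omega] at h'
  omega

theorem midMap_window_ne_of_lt (hm : 1 ≤ m) (hf : IsLeftBiasedEnum n m (r - 1) f)
    (hf' : IsLeftBiasedEnum n m (r - 1) f') (hi : 1 ≤ i) (hij : i < j) (hjm : j ≤ m)
    (E : ∀ k ≤ r - 1, midMap n r m f (i + k) = midMap n r m f' (j + k)) : False := by
  -- Position `r - 1` gives `f m < f' m`; position `m` gives `f' m < f m` or `n < f m + f' m`.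
  unfold midMap at E
  have hmr := hf.le_length
  have hfm := hf.le_half
  have hf'm := hf'.le_half
  have hsum := hf.add_le
  have hf1m' := hf'.add_sub_le le_rfl hmr hm
  have e1 := E (r - 1 - i) (by omega)
  rw [show i + (r - 1 - i) = r - 1 by omega, shiftAppend_of_le le_rfl,
    shiftAppend_of_lt (by omega), show j + (r - 1 - i) - (r - 1) = j - i by omega] at e1
  have hgap1 := hf'.add_sub_le (a := 1) (b := j - i) le_rfl (by omega) (by omega)
  have e2 := E (m - i) (by omega)
  rw [show i + (m - i) = m by omega, shiftAppend_of_le hmr] at e2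
  by_cases hc : j + (m - i) ≤ r - 1
  · rw [shiftAppend_of_le hc] at e2
    have hgap := hf'.add_sub_le (a := m) (b := j + (m - i)) hm hc (by omega)
    omega
  · rw [shiftAppend_of_lt (by omega)] at e2
    have hgap := hf'.add_sub_le (a := 1) (b := j + (m - i) - (r - 1)) le_rfl (by omega)
      (by omega)
    have hf1 := hf'.one_le
    omega

theorem eqOn_of_midMap_window_eq (hm : 1 ≤ m) (hf : IsLeftBiasedEnum n m (r - 1) f)
    (hf' : IsLeftBiasedEnum n m (r - 1) f') (hi : 1 ≤ i) (him : i ≤ m) (hj : 1 ≤ j)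
    (hjm : j ≤ m) (E : ∀ k ≤ r - 1, midMap n r m f (i + k) = midMap n r m f' (j + k)) :
    Set.EqOn f f' (Icc 1 (r - 1)) := by
  wlog hij : i ≤ j generalizing f f' i j
  · exact (this hf' hf hj hjm hi him (fun k hk => (E k hk).symm) (by omega)).symm
  rcases hij.eq_or_lt with rfl | hlt
  · unfold midMap at E
    have hmr := hf.le_length
    have hm_eq : f m = f' m := by
      have e := E (m - i) (by omega)
      rwa [show i + (m - i) = m by omega, shiftAppend_of_le hmr, shiftAppend_of_le hmr] at e
    have hi_eq : f i = f' i := by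
      have e := E 0 (by omega)
      rwa [Nat.add_zero, shiftAppend_of_le (by omega), shiftAppend_of_le (by omega)] at e
    have h1_eq : f 1 = f' 1 := by
      have e := E (r - 1) le_rfl
      rw [show i + (r - 1) = r - 1 + i by omega, shiftAppend_of_lt (by omega),
        shiftAppend_of_lt (by omega), show r - 1 + i - (r - 1) = i by omega] at e
      have hf1m := hf.add_sub_le le_rfl hmr hm
      have hf1m' := hf'.add_sub_le le_rfl hmr hm
      have hfm := hf.le_half
      omega
    intro v hv
    simp only [coe_Icc, Set.mem_Icc] at hv
    by_cases hiv : i ≤ v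
    · have e := E (v - i) (by omega)
      rwa [show i + (v - i) = v by omega, shiftAppend_of_le hv.2, shiftAppend_of_le hv.2] at e
    · have e := E (r - 1 - i + v) (by omega)
      rw [show i + (r - 1 - i + v) = r - 1 + v by omega, shiftAppend_of_lt (by omega),
        shiftAppend_of_lt (by omega), show r - 1 + v - (r - 1) = v by omega] at e
      omega
  · exact (hf.midMap_window_ne_of_lt hm hf' hi hlt hjm E).elim

theorem leftMap_window_ne_midMap (hm : 1 ≤ m) (hf : IsLeftBiasedEnum n m r f)
    (hf' : IsLeftBiasedEnum n m (r - 1) f') (hi : 1 ≤ i) (him : i ≤ m) (hj : 1 ≤ j)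
    (hjm : j ≤ m) (E : ∀ k ≤ r - 1, leftMap n r m f (i + k) = midMap n r m f' (j + k)) :
    False := by
  unfold leftMap midMap at E
  have hmr := hf.le_length
  have hmr' := hf'.le_length
  have hfm := hf.le_half
  have hf'm := hf'.le_half
  have hsum := hf.add_le
  have hsum' := hf'.add_le
  have hf1 := hf.one_le
  have hf1' := hf'.one_le
  have hf1m' := hf'.add_sub_le le_rfl hmr' hm
  rcases lt_trichotomy j (i - 1) with hc | hc | hc
  · have e1 := E (r - j - 1) (by omega)
    rw [show i + (r - j - 1) = r + (i - j - 1) by omega, shiftAppend_of_lt (by omega),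
      show r + (i - j - 1) - r = i - j - 1 by omega,
      show j + (r - j - 1) = r - 1 by omega, shiftAppend_of_le le_rfl] at e1
    have hb1 := hf.add_sub_le (a := 1) (b := i - j - 1) le_rfl (by omega) (by omega)
    have e2 := E (m - j) (by omega)
    rw [show j + (m - j) = m by omega, shiftAppend_of_le hmr'] at e2
    by_cases hc2 : i + (m - j) ≤ r
    · rw [shiftAppend_of_le hc2] at e2
      have hgap := hf.add_sub_le (a := m) (b := i + (m - j)) hm hc2 (by omega)
      omega
    · rw [shiftAppend_of_lt (by omega)] at e2
      have hgap := hf.add_sub_le (a := 1) (b := i + (m - j) - r) le_rfl (by omega) (by omega)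
      omega
  · have e1 := E (r - i + 1) (by omega)
    rw [show i + (r - i + 1) = r + 1 by omega, shiftAppend_of_lt (by omega),
      show r + 1 - r = 1 by omega, show j + (r - i + 1) = r - 1 + 1 by omega,
      shiftAppend_of_lt (by omega), show r - 1 + 1 - (r - 1) = 1 by omega] at e1
    have e2 := E (m - i) (by omega)
    rw [show i + (m - i) = m by omega, shiftAppend_of_le hmr,
      show j + (m - i) = m - 1 by omega, shiftAppend_of_le (by omega)] at e2
    have hgap := hf'.add_sub_le (a := m - 1) (b := m) (by omega) hmr' (by omega)
    omega
  · have e1 := E (r - j) (by omega)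
    rw [show i + (r - j) = r - (j - i) by omega, shiftAppend_of_le (by omega),
      show j + (r - j) = r - 1 + 1 by omega, shiftAppend_of_lt (by omega),
      show r - 1 + 1 - (r - 1) = 1 by omega] at e1
    have hb1 := hf.add_sub_le (a := r - (j - i)) (b := r) (by omega) le_rfl (by omega)
    have e2 := E (m - j) (by omega)
    rw [show i + (m - j) = m - (j - i) by omega, shiftAppend_of_le (by omega),
      show j + (m - j) = m by omega, shiftAppend_of_le hmr'] at e2
    have hb2 := hf.add_sub_le (a := m - (j - i)) (b := m) (by omega) hmr (by omega)
    omega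

theorem leftMap_window_ne_rightMap (hm : 1 ≤ m) (hf : IsLeftBiasedEnum n m r f)
    (hf' : IsLeftBiasedEnum n m r f') (hi : 1 ≤ i) (him : i ≤ m) (hj : 1 ≤ j) (hjm : j ≤ m)
    (E : ∀ k ≤ r - 1, leftMap n r m f (i + k) = rightMap n r m f' (j + k)) : False := by
  have hmr := hf.le_length
  have hmr' := hf'.le_length
  have E' : ∀ k ≤ r - 1, shiftAppend r (n - f m) f (i + k) +
      shiftAppend r (n - f' m + 1) f' (r + m - j - k) = n + 1 := by
    intro k hk
    have e := E k hk
    have h := hf'.rightMap_add_shiftAppend hm (v := j + k) (by simp only [mem_Icc]; omega)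
    rw [show r + m - (j + k) = r + m - j - k by omega] at h
    unfold leftMap at e
    omega
  have hfm := hf.le_half
  have hf'm := hf'.le_half
  have hsum := hf.add_le
  have hsum' := hf'.add_le
  have ea := E' (m - i) (by omega)
  rw [show i + (m - i) = m by omega, shiftAppend_of_le hmr,
    show r + m - j - (m - i) = r + i - j by omega] at ea
  have eb := E' (r - j) (by omega)
  rw [show i + (r - j) = r + i - j by omega,
    show r + m - j - (r - j) = m by omega, shiftAppend_of_le hmr'] at eb
  by_cases hc : i ≤ j
  · rw [shiftAppend_of_le (by omega)] at ea eb
    have h1 := hf'.add_sub_le (a := r + i - j) (b := r) (by omega) le_rfl (by omega)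
    have h2 := hf.add_sub_le (a := r + i - j) (b := r) (by omega) le_rfl (by omega)
    omega
  · rw [shiftAppend_of_lt (by omega), show r + i - j - r = i - j by omega] at ea eb
    have h1 := hf'.one_le_apply (a := i - j) (by omega) (by omega)
    have h2 := hf.one_le_apply (a := i - j) (by omega) (by omega)
    omega

theorem midMap_window_ne_rightMap (hm : 1 ≤ m) (hf : IsLeftBiasedEnum n m (r - 1) f)
    (hf' : IsLeftBiasedEnum n m r f') (hi : 1 ≤ i) (him : i ≤ m) (hj : 1 ≤ j) (hjm : j ≤ m)
    (E : ∀ k ≤ r - 1, midMap n r m f (i + k) = rightMap n r m f' (j + k)) : False := by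
  have hmr := hf.le_length
  have hmr' := hf'.le_length
  have E' : ∀ k ≤ r - 1, shiftAppend (r - 1) (n + 1 - f m - f 1) f (i + k) +
      shiftAppend r (n - f' m + 1) f' (r + m - j - k) = n + 1 := by
    intro k hk
    have e := E k hk
    have h := hf'.rightMap_add_shiftAppend hm (v := j + k) (by simp only [mem_Icc]; omega)
    rw [show r + m - (j + k) = r + m - j - k by omega] at h
    unfold midMap at e
    omega
  have hfm := hf.le_half
  have hf'm := hf'.le_half
  have hsum := hf.add_le
  have hsum' := hf'.add_le
  have hf1 := hf.one_le
  have hf1m := hf.add_sub_le le_rfl hmr hm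
  have ea := E' (m - i) (by omega)
  rw [show i + (m - i) = m by omega, shiftAppend_of_le hmr,
    show r + m - j - (m - i) = r + i - j by omega] at ea
  have eb := E' (r - j) (by omega)
  rw [show r + m - j - (r - j) = m by omega, shiftAppend_of_le hmr'] at eb
  rcases lt_trichotomy i j with hc | rfl | hc
  · rw [shiftAppend_of_le (by omega)] at ea
    rw [show i + (r - j) = r + i - j by omega, shiftAppend_of_le (by omega)] at eb
    have h1 := hf'.add_sub_le (a := r + i - j) (b := r) (by omega) le_rfl (by omega)
    have h2 := hf.add_sub_le (a := r + i - j) (b := r - 1) (by omega) le_rfl (by omega)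
    omega
  · rw [show r + i - i = r by omega, shiftAppend_of_le le_rfl] at ea
    rw [show i + (r - i) = r - 1 + 1 by omega, shiftAppend_of_lt (by omega),
      show r - 1 + 1 - (r - 1) = 1 by omega] at eb
    omega
  · rw [shiftAppend_of_lt (by omega), show r + i - j - r = i - j by omega] at ea
    rw [show i + (r - j) = r - 1 + (i - j + 1) by omega, shiftAppend_of_lt (by omega),
      show r - 1 + (i - j + 1) - (r - 1) = i - j + 1 by omega] at eb
    have h1 := hf'.one_le_apply (a := i - j) (by omega) (by omega)
    have h2 := hf.add_sub_le (a := 1) (b := i - j + 1) le_rfl (by omega) (by omega)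
    omega

end IsLeftBiasedEnum

noncomputable def biasedMap (n r m : ℕ) : Finset ℕ ⊕ Finset ℕ ⊕ Finset ℕ → ℕ → ℕ
  | .inl S => leftMap n r m (orderEnum S)
  | .inr (.inl S) => rightMap n r m (orderEnum S)
  | .inr (.inr S) => midMap n r m (orderEnum S)

noncomputable def biasedIndex (n r m : ℕ) : Finset (Finset ℕ ⊕ Finset ℕ ⊕ Finset ℕ) :=
  (biasedSets n r m).disjSum ((biasedSets n r m).disjSum (biasedSets n (r - 1) m))

section BiasedCopies

variable {n r m : ℕ} {x y : Finset ℕ ⊕ Finset ℕ ⊕ Finset ℕ}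

theorem card_biasedIndex :
    #(biasedIndex n r m) = 2 * hcount n r m + hcount n (r - 1) m := by
  rw [biasedIndex, card_disjSum, card_disjSum, hcount, hcount, biasedSets, biasedSets]
  ring

theorem strictMonoOn_biasedMap (hm : 1 ≤ m) (hx : x ∈ biasedIndex n r m) :
    StrictMonoOn (biasedMap n r m x) (Icc 1 (r + m - 1)) := by
  rcases x with S | S | S <;>
    simp only [biasedIndex, inl_mem_disjSum, inr_mem_disjSum] at hx <;>
    have hf := isLeftBiasedEnum_of_mem_biasedSets hm hx
  · exact hf.strictMonoOn_shiftAppend (β := 0) hm zero_le_one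
  · exact hf.strictMonoOn_rightMap hm
  · exact hf.strictMonoOn_midMap hm

theorem isCopy_pathCopy_biasedMap (hm : 1 ≤ m) (hx : x ∈ biasedIndex n r m) :
    IsCopy n (r + m - 1) (pathEdges r (r + m - 1))
      (pathCopy r (r + m - 1) (biasedMap n r m x)) := by
  refine ⟨biasedMap n r m x, strictMonoOn_biasedMap hm hx, fun v hv => ?_, rfl⟩
  rcases x with S | S | S <;>
    simp only [biasedIndex, inl_mem_disjSum, inr_mem_disjSum] at hx <;>
    have hf := isLeftBiasedEnum_of_mem_biasedSets hm hx
  · exact hf.shiftAppend_mem_Icc (β := 0) hm zero_le_one hv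
  · exact hf.rightMap_mem_Icc hm hv
  · exact hf.midMap_mem_Icc hm hv

theorem eq_of_not_disjoint_pathCopy_biasedMap (hm : 1 ≤ m) (hmr : m ≤ r) (hx : x ∈ biasedIndex n r m)
    (hy : y ∈ biasedIndex n r m)
    (h : ¬Disjoint (pathCopy r (r + m - 1) (biasedMap n r m x))
      (pathCopy r (r + m - 1) (biasedMap n r m y))) : x = y := by
  obtain ⟨i, j, hi, hi', hj, hj', E⟩ := exists_window_eq_of_not_disjoint_pathCopy (by omega)
    (by omega) (strictMonoOn_biasedMap hm hx) (strictMonoOn_biasedMap hm hy) h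
  rw [show r + m - 1 + 1 - r = m by omega] at hi' hj'
  rcases x with S | S | S <;> rcases y with S' | S' | S' <;>
    simp only [biasedIndex, inl_mem_disjSum, inr_mem_disjSum] at hx hy <;>
    have hf := isLeftBiasedEnum_of_mem_biasedSets hm hx <;>
    have hf' := isLeftBiasedEnum_of_mem_biasedSets hm hy <;>
    simp only [biasedMap] at E
  · rw [eq_of_eqOn_orderEnum hx hy
      (hf.eqOn_of_shiftAppend_window_eq (β := 0) hm hf' hi hi' hj hj' E)]
  · exact (hf.leftMap_window_ne_rightMap hm hf' hi hi' hj hj' E).elim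
  · exact (hf.leftMap_window_ne_midMap hm hf' hi hi' hj hj' E).elim
  · exact (hf'.leftMap_window_ne_rightMap hm hf hj hj' hi hi' fun k hk => (E k hk).symm).elim
  · rw [eq_of_eqOn_orderEnum hx hy
      (hf.eqOn_of_rightMap_window_eq hm hf' hi hi' hj hj' E)]
  · exact (hf'.midMap_window_ne_rightMap hm hf hj hj' hi hi' fun k hk => (E k hk).symm).elim
  · exact (hf'.leftMap_window_ne_midMap hm hf hj hj' hi hi' fun k hk => (E k hk).symm).elim
  · exact (hf.midMap_window_ne_rightMap hm hf' hi hi' hj hj' E).elim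
  · rw [eq_of_eqOn_orderEnum hx hy
      (hf.eqOn_of_midMap_window_eq hm hf' hi hi' hj hj' E)]

end BiasedCopies

theorem stmt1_general (n r s m : ℕ)
    (hr : 2 ≤ r) (hrs : r ≤ s) (hs : s ≤ 2 * r - 1) (hm : m = s - r + 1) :
    2 * hcount n r m + hcount n (r - 1) m ≤ nu n s (pathEdges r s) := by
  obtain rfl : s = r + m - 1 := by omega
  have hm1 : 1 ≤ m := by omega
  have hmr : m ≤ r := by omega
  rw [← card_biasedIndex]
  exact card_le_nu_of_not_disjoint_imp_eq (subset_Icc_of_mem_pathEdges hrs)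
    (fun _ hx => isCopy_pathCopy_biasedMap hm1 hx) (fun _ _ => pathCopy_nonempty _)
    (fun _ hx _ hy => eq_of_not_disjoint_pathCopy_biasedMap hm1 hmr hx hy)

/-- For even `n > 0`, `2 ≤ r ≤ s ≤ 2r-1` and `m = s-r+1`,
`ν(n, P^{(r)}_s) ≥ 2·h(n,r,m) + h(n,r-1,m)`. -/
theorem stmt1 (n r s m : ℕ) (hn : 0 < n) (hev : Even n)
    (hr : 2 ≤ r) (hrs : r ≤ s) (hs : s ≤ 2 * r - 1) (hm : m = s - r + 1) :
    2 * hcount n r m + hcount n (r - 1) m ≤ nu n s (pathEdges r s) :=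
  stmt1_general n r s m hr hrs hs hm
end

section
/- Fix integers r and m with 1 ≤ m ≤ r. There exists a constant C > 0 such that for every even integer n ≥ 2r, |h(n,r,m) − C(n,r)/2^m| ≤ C·n^{r−1}, where C(n,r) is the binomial coefficient. -/
open Finset
open scoped Classical

/-
Call `S ⊆ [2q]` pair-free if it contains no antipodal pair `{x, 2q+1-x}`. A pair-free
`r`-set is the same thing as a set `T ⊆ [q]` of `r` distances from the centre together with
a choice of side for each of them, so there are `C(q,r)·2^r` of them. Such a set is
`m`-left-biased exactly when its `m` points farthest from the centre lie on the left, which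
holds for a `2^{-m}` fraction of the side choices. The `r`-sets containing an antipodal pair
number at most `2q·C(2q,r-2) ≤ (2q)^{r-1}`, and they move both `h(2q,r,m)` and
`C(2q,r)/2^m` by at most that much.
-/

def PairFree (q : ℕ) (S : Finset ℕ) : Prop := ∀ x ∈ S, 2 * q + 1 - x ∉ S

/-- Folds `[2q]` two-to-one onto `[q]`: both `q + 1 - d` and `q + d` go to `d`. -/
def centreDist (q x : ℕ) : ℕ := if x ≤ q then q + 1 - x else x - q

def sidePlace (q : ℕ) (U : Finset ℕ) (d : ℕ) : ℕ := if d ∈ U then q + d else q + 1 - d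

def spread (q : ℕ) (T U : Finset ℕ) : Finset ℕ := T.image (sidePlace q U)

section Spread

variable {q d : ℕ} {S T U : Finset ℕ}

theorem sidePlace_mem_Icc (hd : d ∈ Icc 1 q) : sidePlace q U d ∈ Icc 1 (2 * q) := by
  simp only [mem_Icc] at hd ⊢
  unfold sidePlace
  split_ifs <;> omega

theorem centreDist_sidePlace (hd : d ∈ Icc 1 q) : centreDist q (sidePlace q U d) = d := by
  simp only [mem_Icc] at hd
  unfold sidePlace centreDist
  split_ifs <;> omega

theorem lt_sidePlace_iff (hd : d ∈ Icc 1 q) : q < sidePlace q U d ↔ d ∈ U := by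
  simp only [mem_Icc] at hd
  unfold sidePlace
  split_ifs with h <;> simp only [h, iff_true, iff_false] <;> omega

theorem sidePlace_centreDist {x : ℕ} (hx : x ∈ Icc 1 (2 * q))
    (hU : centreDist q x ∈ U ↔ q < x) : sidePlace q U (centreDist q x) = x := by
  simp only [mem_Icc] at hx
  by_cases hxq : q < x
  · rw [sidePlace, if_pos (hU.2 hxq), centreDist, if_neg (by omega)]
    omega
  · rw [sidePlace, if_neg (mt hU.1 hxq), centreDist, if_pos (by omega)]
    omega

theorem injOn_sidePlace : Set.InjOn (sidePlace q U) (Icc 1 q : Finset ℕ) :=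
  Set.LeftInvOn.injOn fun _ hd => centreDist_sidePlace (mem_coe.1 hd)

theorem card_spread (hT : T ⊆ Icc 1 q) : #(spread q T U) = #T :=
  card_image_of_injOn (injOn_sidePlace.mono (coe_subset.2 hT))

theorem spread_subset (hT : T ⊆ Icc 1 q) : spread q T U ⊆ Icc 1 (2 * q) := by
  intro x hx
  obtain ⟨d, hd, rfl⟩ := mem_image.1 hx
  exact sidePlace_mem_Icc (hT hd)

theorem pairFree_spread (hT : T ⊆ Icc 1 q) : PairFree q (spread q T U) := by
  rintro _ hx hx'
  obtain ⟨d, hd, rfl⟩ := mem_image.1 hx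
  obtain ⟨e, he, hde⟩ := mem_image.1 hx'
  have := mem_Icc.1 (hT hd)
  have := mem_Icc.1 (hT he)
  unfold sidePlace at hde
  split_ifs at hde with heU hdU <;> first
    | omega
    | obtain rfl : e = d := by omega
      contradiction

theorem image_centreDist_spread (hT : T ⊆ Icc 1 q) :
    (spread q T U).image (centreDist q) = T := by
  rw [spread, image_image]
  exact (image_congr fun d hd => centreDist_sidePlace (hT hd)).trans image_id'

theorem image_centreDist_filter_spread (hT : T ⊆ Icc 1 q) (hU : U ⊆ T) :
    ((spread q T U).filter (q < ·)).image (centreDist q) = U := by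
  have hright : T.filter (fun d => q < sidePlace q U d) = U := by
    rw [filter_congr fun d hd => lt_sidePlace_iff (hT hd), filter_mem_eq_inter,
      inter_eq_right.2 hU]
  rw [spread, filter_image, hright, ← spread, image_centreDist_spread (hU.trans hT)]

theorem image_centreDist_subset (hS : S ⊆ Icc 1 (2 * q)) :
    S.image (centreDist q) ⊆ Icc 1 q := by
  intro d hd
  obtain ⟨x, hx, rfl⟩ := mem_image.1 hd
  have := mem_Icc.1 (hS hx)
  rw [mem_Icc, centreDist]
  split_ifs <;> omega

theorem spread_image_centreDist (hS : S ⊆ Icc 1 (2 * q)) (hS' : PairFree q S) :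
    spread q (S.image (centreDist q)) ((S.filter (q < ·)).image (centreDist q)) = S := by
  rw [spread, image_image]
  refine (image_congr fun x hx => sidePlace_centreDist (hS hx) ⟨fun h => ?_, fun h => ?_⟩).trans
    image_id'
  · obtain ⟨y, hy, hxy⟩ := mem_image.1 h
    rw [mem_filter] at hy
    by_contra hxq
    have := mem_Icc.1 (hS hx)
    unfold centreDist at hxy
    rw [if_neg (by omega), if_pos (by omega)] at hxy
    exact hS' x hx (by convert hy.1 using 1; omega)
  · exact mem_image_of_mem _ (mem_filter.2 ⟨hx, h⟩)

end Spread

theorem card_filter_pairFree_filter (q r : ℕ) (p : Finset ℕ → Prop) :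
    #(((powersetCard r (Icc 1 (2 * q))).filter (PairFree q)).filter p) =
      ∑ T ∈ powersetCard r (Icc 1 q), #(T.powerset.filter fun U => p (spread q T U)) := by
  rw [← card_sigma]
  symm
  refine card_bij (fun TU _ => spread q TU.1 TU.2) ?_ ?_ ?_
  · rintro ⟨T, U⟩ hTU
    simp only [mem_sigma, mem_powersetCard, mem_filter, mem_powerset] at hTU ⊢
    obtain ⟨⟨hT, rfl⟩, -, hp⟩ := hTU
    exact ⟨⟨⟨spread_subset hT, card_spread hT⟩, pairFree_spread hT⟩, hp⟩
  · rintro ⟨T, U⟩ hTU ⟨T', U'⟩ hTU' h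
    simp only [mem_sigma, mem_powersetCard, mem_filter, mem_powerset] at hTU hTU' h
    have hT := image_centreDist_spread (U := U) hTU.1.1
    rw [h, image_centreDist_spread hTU'.1.1] at hT
    have hU := image_centreDist_filter_spread hTU.1.1 hTU.2.1
    rw [h, image_centreDist_filter_spread hTU'.1.1 hTU'.2.1] at hU
    subst hT hU
    rfl
  · intro S hS
    simp only [mem_filter, mem_powersetCard] at hS
    obtain ⟨⟨⟨hS, rfl⟩, hS'⟩, hp⟩ := hS
    have hspread := spread_image_centreDist hS hS'
    refine ⟨⟨S.image (centreDist q), (S.filter (q < ·)).image (centreDist q)⟩, ?_, hspread⟩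
    simp only [mem_sigma, mem_powersetCard, mem_filter, mem_powerset]
    exact ⟨⟨image_centreDist_subset hS,
      (card_spread (image_centreDist_subset hS)).symm.trans (congrArg card hspread)⟩,
      image_subset_image (filter_subset _ _), by rwa [hspread]⟩

theorem Finset.filter_le_eq_of_card_eq {α : Type*} [LinearOrder α] {T : Finset α} {a b : α}
    (h : #(T.filter (a ≤ ·)) = #(T.filter (b ≤ ·))) :
    T.filter (a ≤ ·) = T.filter (b ≤ ·) := by
  wlog hab : a ≤ b generalizing a b
  · exact (this h.symm (le_of_not_ge hab)).symm
  refine (eq_of_subset_of_card_le (fun x hx => ?_) h.le).symm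
  rw [mem_filter] at hx ⊢
  exact ⟨hx.1, hab.trans hx.2⟩

theorem exists_card_filter_le_eq {m : ℕ} (T : Finset ℕ) (hm : m ≤ #T) :
    ∃ v, #(T.filter (v ≤ ·)) = m := by
  induction T using Finset.induction_on_min generalizing m with
  | empty => exact ⟨0, by simp_all⟩
  | insert a s has ih =>
    have ha : a ∉ s := fun ha => lt_irrefl a (has a ha)
    rw [card_insert_of_notMem ha] at hm
    rcases hm.lt_or_eq with hm | rfl
    · obtain ⟨v, hv⟩ := ih (Nat.le_of_lt_succ hm)
      refine ⟨max v (a + 1), ?_⟩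
      rw [filter_insert, if_neg (by omega), ← hv]
      congr 1
      exact filter_congr fun x hx => by have := has x hx; omega
    · refine ⟨a, ?_⟩
      rw [filter_insert, if_pos le_rfl, filter_true_of_mem fun x hx => (has x hx).le,
        card_insert_of_notMem ha]

theorem card_filter_powerset_upper {m : ℕ} {T : Finset ℕ} (hm : m ≤ #T) :
    #(T.powerset.filter fun U => ∃ v, #(T.filter (v ≤ ·)) = m ∧ ∀ d ∈ U, d < v) =
      2 ^ (#T - m) := by
  obtain ⟨v₀, hv₀⟩ := exists_card_filter_le_eq T hm
  have hfilter :
      (T.powerset.filter fun U => ∃ v, #(T.filter (v ≤ ·)) = m ∧ ∀ d ∈ U, d < v) =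
        (T.filter (· < v₀)).powerset := by
    ext U
    simp only [mem_filter, mem_powerset]
    constructor
    · rintro ⟨hUT, v, hv, hUv⟩ d hd
      have hdv : d ∉ T.filter (v ≤ ·) := by simp [hUv d hd]
      rw [filter_le_eq_of_card_eq (hv.trans hv₀.symm), mem_filter, not_and, not_le] at hdv
      exact mem_filter.2 ⟨hUT hd, hdv (hUT hd)⟩
    · intro hU
      exact ⟨hU.trans (filter_subset _ _), v₀, hv₀, fun d hd => (mem_filter.1 (hU hd)).2⟩
  have hsplit := card_filter_add_card_filter_not (s := T) (v₀ ≤ ·)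
  simp only [not_le] at hsplit
  rw [hfilter, card_powerset]
  congr 1
  omega

section LeftBiased

variable {q d u : ℕ} {T U : Finset ℕ}

theorem sidePlace_mem_Icc_left (hd : d ∈ Icc 1 q) (hu : u ≤ q) :
    sidePlace q U d ∈ Icc 1 u ↔ d ∉ U ∧ q + 1 - u ≤ d := by
  simp only [mem_Icc] at hd ⊢
  unfold sidePlace
  split_ifs with h <;> simp only [h, not_true, not_false_eq_true, true_and, false_and,
    iff_false] <;> omega

theorem sidePlace_mem_Icc_right (hd : d ∈ Icc 1 q) (hu : u ≤ q) :
    sidePlace q U d ∈ Icc (2 * q + 1 - u) (2 * q) ↔ d ∈ U ∧ q + 1 - u ≤ d := by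
  simp only [mem_Icc] at hd ⊢
  unfold sidePlace
  split_ifs with h <;> simp only [h, true_and, false_and, iff_false] <;> omega

theorem leftBiased_spread_iff {m : ℕ} (hT : T ⊆ Icc 1 q) (hU : U ⊆ T) :
    LeftBiased (2 * q) m (spread q T U) ↔
      ∃ v, #(T.filter (v ≤ ·)) = m ∧ ∀ d ∈ U, d < v := by
  have hcut : ∀ u ≤ q, (#(spread q T U ∩ Icc 1 u) = m ∧
      spread q T U ∩ Icc (2 * q + 1 - u) (2 * q) = ∅) ↔
      #(T.filter (q + 1 - u ≤ ·)) = m ∧ ∀ d ∈ U, d < q + 1 - u := by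
    intro u hu
    rw [← filter_mem_eq_inter, ← filter_mem_eq_inter, spread, filter_image, filter_image,
      card_image_of_injOn (injOn_sidePlace.mono (coe_subset.2 ((filter_subset _ T).trans hT))),
      image_eq_empty, filter_congr fun d hd => sidePlace_mem_Icc_left (hT hd) hu,
      filter_congr fun d hd => sidePlace_mem_Icc_right (hT hd) hu, filter_eq_empty_iff]
    have hright : (∀ d ∈ T, ¬(d ∈ U ∧ q + 1 - u ≤ d)) ↔ ∀ d ∈ U, d < q + 1 - u :=
      ⟨fun h d hd => not_le.1 fun h' => h d (hU hd) ⟨hd, h'⟩,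
        fun h d _ hd => (h d hd.1).not_ge hd.2⟩
    rw [hright]
    refine and_congr_left fun hUv => ?_
    rw [filter_congr fun d _ => (and_iff_right_of_imp fun hd hdU => (hUv d hdU).not_ge hd :
      d ∉ U ∧ q + 1 - u ≤ d ↔ _)]
  rw [LeftBiased, Nat.mul_div_cancel_left _ two_pos]
  constructor
  · rintro ⟨u, hu, h⟩
    exact ⟨q + 1 - u, (hcut u hu).1 h⟩
  · rintro ⟨v, hv, hUv⟩
    -- clamping `v` into `[1, q + 1]` changes nothing on subsets of `[1, q]`
    set w := max 1 (min v (q + 1))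
    refine ⟨q + 1 - w, by omega, (hcut _ (by omega)).2 ?_⟩
    have hw : q + 1 - (q + 1 - w) = w := by omega
    rw [hw, ← hv]
    refine ⟨congrArg card (filter_congr fun d hd => ?_), fun d hd => ?_⟩
    · have := mem_Icc.1 (hT hd)
      omega
    · have := mem_Icc.1 (hT (hU hd))
      have := hUv d hd
      omega

end LeftBiased

theorem card_pairFree (q r : ℕ) :
    #((powersetCard r (Icc 1 (2 * q))).filter (PairFree q)) = q.choose r * 2 ^ r := by
  have h := card_filter_pairFree_filter q r fun _ => True
  simp only [filter_true] at h
  rw [h, sum_congr rfl fun T hT => by rw [card_powerset, (mem_powersetCard.1 hT).2], sum_const,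
    card_powersetCard, Nat.card_Icc, Nat.add_sub_cancel, smul_eq_mul]

theorem card_pairFree_leftBiased {m r : ℕ} (q : ℕ) (hmr : m ≤ r) :
    #(((powersetCard r (Icc 1 (2 * q))).filter (PairFree q)).filter (LeftBiased (2 * q) m)) =
      q.choose r * 2 ^ (r - m) := by
  rw [card_filter_pairFree_filter, sum_congr rfl fun T hT => ?_, sum_const, card_powersetCard,
    Nat.card_Icc, Nat.add_sub_cancel, smul_eq_mul]
  obtain ⟨hTq, rfl⟩ := mem_powersetCard.1 hT
  rw [filter_congr fun U hU => leftBiased_spread_iff hTq (mem_powerset.1 hU),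
    card_filter_powerset_upper hmr]

theorem card_not_pairFree_le (q r : ℕ) :
    #((powersetCard r (Icc 1 (2 * q))).filter fun S => ¬PairFree q S) ≤ (2 * q) ^ (r - 1) := by
  rcases lt_or_ge r 2 with hr | hr
  · rw [filter_false_of_mem, card_empty]
    · exact Nat.zero_le _
    intro S hS hS'
    refine hS' fun x hx hx' => ?_
    have := card_le_one.1 (by rw [(mem_powersetCard.1 hS).2]; omega) x hx _ hx'
    omega
  have hsub : (powersetCard r (Icc 1 (2 * q))).filter (fun S => ¬PairFree q S) ⊆
      (Icc 1 (2 * q)).biUnion fun x =>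
        (powersetCard (r - 2) (Icc 1 (2 * q))).image (· ∪ {x, 2 * q + 1 - x}) := by
    intro S hS
    simp only [mem_filter, mem_powersetCard, PairFree, not_forall, not_not] at hS
    obtain ⟨⟨hS, rfl⟩, x, hx, hx'⟩ := hS
    have hpair : {x, 2 * q + 1 - x} ⊆ S := insert_subset hx (singleton_subset_iff.2 hx')
    have hcard : #({x, 2 * q + 1 - x} : Finset ℕ) = 2 := card_pair (by omega)
    refine mem_biUnion.2 ⟨x, hS hx, mem_image.2 ⟨S \ {x, 2 * q + 1 - x}, ?_,
      sdiff_union_of_subset hpair⟩⟩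
    exact mem_powersetCard.2 ⟨sdiff_subset.trans hS, by rw [card_sdiff_of_subset hpair, hcard]⟩
  calc _ ≤ _ := card_le_card hsub
    _ ≤ #(Icc 1 (2 * q)) * (2 * q).choose (r - 2) :=
      card_biUnion_le_card_mul _ _ _ fun _ _ => card_image_le.trans_eq <| by
        rw [card_powersetCard, Nat.card_Icc, Nat.add_sub_cancel]
    _ ≤ 2 * q * (2 * q) ^ (r - 2) := by
      rw [Nat.card_Icc, Nat.add_sub_cancel]
      exact Nat.mul_le_mul_left _ (Nat.choose_le_pow _ _)
    _ = (2 * q) ^ (r - 1) := by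
      rw [← pow_succ']
      congr 1
      omega

theorem abs_add_sub_add_div_le {a e P k : ℝ} (hk : 1 ≤ k) (he : 0 ≤ e) (heP : e ≤ P) :
    |a + e - (a * k + P) / k| ≤ P := by
  have hk₀ : 0 < k := by linarith
  have hP : 0 ≤ P := he.trans heP
  rw [add_div, mul_div_cancel_right₀ _ hk₀.ne', abs_le]
  have := div_le_self hP hk
  have := div_nonneg hP hk₀.le
  constructor <;> linarith

theorem abs_hcount_two_mul_sub_le (q : ℕ) {r m : ℕ} (hmr : m ≤ r) :
    |(hcount (2 * q) r m : ℝ) - ((2 * q).choose r : ℝ) / 2 ^ m| ≤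
      ((2 * q : ℕ) : ℝ) ^ (r - 1) := by
  set 𝒮 := powersetCard r (Icc 1 (2 * q))
  set P := #(𝒮.filter fun S => ¬PairFree q S)
  have hchoose : (2 * q).choose r = q.choose r * 2 ^ (r - m) * 2 ^ m + P := by
    rw [mul_assoc, ← pow_add, Nat.sub_add_cancel hmr, ← card_pairFree,
      card_filter_add_card_filter_not, card_powersetCard, Nat.card_Icc, Nat.add_sub_cancel]
  have hcount_eq : hcount (2 * q) r m = q.choose r * 2 ^ (r - m) +
      #((𝒮.filter (LeftBiased (2 * q) m)).filter fun S => ¬PairFree q S) := by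
    rw [hcount, ← card_filter_add_card_filter_not (PairFree q), filter_comm,
      card_pairFree_leftBiased q hmr]
  have hbad : #((𝒮.filter (LeftBiased (2 * q) m)).filter fun S => ¬PairFree q S) ≤ P :=
    card_le_card (filter_subset_filter _ (filter_subset _ _))
  have hP : (P : ℝ) ≤ ((2 * q : ℕ) : ℝ) ^ (r - 1) := by
    exact_mod_cast card_not_pairFree_le q r
  rw [hcount_eq, hchoose]
  push_cast
  refine (abs_add_sub_add_div_le (one_le_pow₀ one_le_two) (Nat.cast_nonneg _) ?_).trans ?_
  · exact_mod_cast hbad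
  · exact_mod_cast hP

theorem stmt4_general (r m : ℕ) (hmr : m ≤ r) :
    ∃ C : ℝ, 0 < C ∧ ∀ n : ℕ, Even n → 2 * r ≤ n →
      |(hcount n r m : ℝ) - (n.choose r : ℝ) / 2 ^ m| ≤ C * (n : ℝ) ^ (r - 1) := by
  refine ⟨1, one_pos, fun n ⟨q, hq⟩ _ => ?_⟩
  rw [one_mul, hq, ← two_mul]
  exact abs_hcount_two_mul_sub_le q hmr

/-- For fixed `1 ≤ m ≤ r` there is a constant `C > 0` such that for all even
`n ≥ 2r`, `|h(n,r,m) - C(n,r)/2^m| ≤ C·n^(r-1)`. -/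
theorem stmt4 (r m : ℕ) (h1 : 1 ≤ m) (hmr : m ≤ r) :
    ∃ C : ℝ, 0 < C ∧ ∀ n : ℕ, Even n → 2 * r ≤ n →
      |(hcount n r m : ℝ) - (n.choose r : ℝ) / 2 ^ m| ≤ C * (n : ℝ) ^ (r - 1) :=
  stmt4_general r m hmr
end
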